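/- For every real λ ≥ 1, ∫_{-2}^{2} cos[(1 - 1/λ) arcsin(x/2)] (4-x²)^{-1/(2λ)} dx = 2^{1-1/λ} √π Γ(1 - 1/(2λ)) Γ(3/2 - 1/(2λ)) / Γ(2 - 1/λ). -/

import Mathlib

/-!
Substituting `x = 2 sin θ` turns the integral into `∫_{-π/2}^{π/2} (2 cos θ)^a cos (a θ) dθ`
with `a = 1 - 1/λ`. For `|θ| < π/2` we have `1 + e^{2iθ} = 2 cos θ · e^{iθ}`, so the integrand is
the real part of `(1 + z)^a` at `z = e^{2iθ}`; as `(1 + z)^a` is holomorphic on the unit disc and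
continuous up to its boundary, the mean value property at `z = 0` makes the integral `π`. The
right-hand side equals `π` by Legendre's duplication formula with `s = 1 - 1/(2λ)`.
-/

open Real Set MeasureTheory

theorem diffContOnCl_one_add_cpow {a : ℝ} (ha : 0 ≤ a) :
    DiffContOnCl ℂ (fun z : ℂ => (1 + z) ^ (a : ℂ)) (Metric.ball 0 1) := by
  refine ⟨fun z hz => ?_, ?_⟩
  · have hre : 0 < (1 + z).re := by
      have := (abs_lt.1 ((Complex.abs_re_le_norm z).trans_lt (mem_ball_zero_iff.1 hz))).1
      simp only [Complex.add_re, Complex.one_re]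
      linarith
    exact ((differentiableAt_id.const_add 1).cpow_const (Or.inl hre)).differentiableWithinAt
  · rw [closure_ball 0 one_ne_zero]
    rcases ha.eq_or_lt with rfl | ha
    · simpa using continuousOn_const
    intro z hz
    have hre : 0 ≤ (1 + z).re := by
      have := (abs_le.1 ((Complex.abs_re_le_norm z).trans (mem_closedBall_zero_iff.1 hz))).1
      simp only [Complex.add_re, Complex.one_re]
      linarith
    exact ((Complex.continuousAt_cpow_const_of_re_pos (Or.inl hre)
      (by simpa using ha)).comp (continuous_const.add continuous_id).continuousAt).continuousWithinAt

theorem re_one_add_exp_two_mul_cpow {a θ : ℝ} (hθ : θ ∈ Ioo (-(π / 2)) (π / 2)) :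
    ((1 + Complex.exp (2 * θ * Complex.I)) ^ (a : ℂ)).re = (2 * cos θ) ^ a * cos (a * θ) := by
  have hcos : 0 < 2 * cos θ := mul_pos two_pos (cos_pos_of_mem_Ioo hθ)
  have hpolar : 1 + Complex.exp (2 * θ * Complex.I) =
      Complex.exp (Real.log (2 * cos θ) + θ * Complex.I) := by
    rw [Complex.exp_add, ← Complex.ofReal_exp, Real.exp_log hcos]
    push_cast
    rw [Complex.cos, show 2 * (θ : ℂ) * Complex.I = θ * Complex.I + θ * Complex.I by ring,
      Complex.exp_add, neg_mul, Complex.exp_neg]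
    field_simp
    ring
  have him : -π < θ ∧ θ ≤ π := by constructor <;> linarith [hθ.1, hθ.2, pi_pos]
  rw [hpolar, Complex.cpow_def_of_ne_zero (Complex.exp_ne_zero _),
    Complex.log_exp (by simpa using him.1) (by simpa using him.2), Complex.exp_re,
    rpow_def_of_pos hcos]
  simp [mul_comm]

theorem setIntegral_two_cos_rpow_mul_cos {a : ℝ} (ha : 0 ≤ a) :
    ∫ θ in Ioo (-(π / 2)) (π / 2), (2 * cos θ) ^ a * cos (a * θ) = π := by
  set f : ℂ → ℝ := fun z => ((1 + z) ^ (a : ℂ)).re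
  have hdiff := diffContOnCl_one_add_cpow ha
  have hmean : circleAverage f 0 1 = 1 := by
    have hint : CircleIntegrable (fun z : ℂ => (1 + z) ^ (a : ℂ)) 0 1 :=
      (hdiff.continuousOn_ball.mono Metric.sphere_subset_closedBall).circleIntegrable zero_le_one
    have := Complex.reCLM.circleAverage_comp_comm hint
    rw [DiffContOnCl.circleAverage (R := 1) (by rwa [abs_one])] at this
    simpa [Function.comp_def] using this
  calc ∫ θ in Ioo (-(π / 2)) (π / 2), (2 * cos θ) ^ a * cos (a * θ)
      = ∫ θ in -(π / 2)..π / 2, f (circleMap 0 1 (2 * θ)) := by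
        rw [intervalIntegral.integral_of_le (by linarith [pi_pos]), integral_Ioc_eq_integral_Ioo]
        refine setIntegral_congr_fun measurableSet_Ioo fun θ hθ => ?_
        simp only [f, circleMap_zero, Complex.ofReal_one, one_mul, Complex.ofReal_mul,
          Complex.ofReal_ofNat]
        exact (re_one_add_exp_two_mul_cpow hθ).symm
    _ = 2⁻¹ * ∫ φ in 0..2 * π, f (circleMap 0 1 (φ + -π)) := by
        rw [intervalIntegral.integral_comp_mul_left (fun φ => f (circleMap 0 1 φ)) two_ne_zero,
          intervalIntegral.integral_comp_add_right (fun φ => f (circleMap 0 1 φ))]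
        ring_nf
    _ = π * circleAverage f 0 1 := by
        rw [circleAverage_eq_integral_add (-π), smul_eq_mul]
        field_simp
    _ = π := by rw [hmean, mul_one]

theorem image_two_mul_sin_Ioo :
    (fun θ => 2 * sin θ) '' Ioo (-(π / 2)) (π / 2) = Ioo (-2) 2 := by
  ext x
  constructor
  · rintro ⟨θ, hθ, rfl⟩
    have := mapsTo_sin_Ioo hθ
    constructor <;> linarith [this.1, this.2]
  · intro hx
    refine ⟨arcsin (x / 2), ⟨neg_pi_div_two_lt_arcsin.2 ?_, arcsin_lt_pi_div_two.2 ?_⟩, ?_⟩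
    · linarith [hx.1]
    · linarith [hx.2]
    · show 2 * sin (arcsin (x / 2)) = x
      rw [sin_arcsin (by linarith [hx.1]) (by linarith [hx.2])]
      ring

theorem intervalIntegral_cos_arcsin_eq_setIntegral (a : ℝ) :
    ∫ x in (-2 : ℝ)..2, cos (a * arcsin (x / 2)) * (4 - x ^ 2) ^ ((a - 1) / 2) =
      ∫ θ in Ioo (-(π / 2)) (π / 2), (2 * cos θ) ^ a * cos (a * θ) := by
  rw [intervalIntegral.integral_of_le (by norm_num), integral_Ioc_eq_integral_Ioo,
    ← image_two_mul_sin_Ioo,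
    integral_image_eq_integral_abs_deriv_smul measurableSet_Ioo
      (fun θ _ => ((hasDerivAt_sin θ).const_mul 2).hasDerivWithinAt)
      ((mul_right_injective₀ two_ne_zero).comp_injOn (injOn_sin.mono Ioo_subset_Icc_self))]
  refine setIntegral_congr_fun measurableSet_Ioo fun θ hθ => ?_
  have hcos : 0 < 2 * cos θ := mul_pos two_pos (cos_pos_of_mem_Ioo hθ)
  have hsq : 4 - (2 * sin θ) ^ 2 = (2 * cos θ) ^ (2 : ℝ) := by
    rw [rpow_two]; nlinarith [sin_sq_add_cos_sq θ]
  rw [smul_eq_mul, mul_div_cancel_left₀ _ two_ne_zero,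
    arcsin_sin (by linarith [hθ.1]) (by linarith [hθ.2]), hsq, ← rpow_mul hcos.le,
    abs_of_pos hcos, mul_div_cancel₀ _ two_ne_zero, rpow_sub_one hcos.ne']
  field_simp [(cos_pos_of_mem_Ioo hθ).ne']

theorem two_rpow_mul_sqrt_pi_mul_Gamma_mul_Gamma_add_half_div {s : ℝ} (hs : 0 < s) :
    2 ^ (2 * s - 1) * √π * Gamma s * Gamma (s + 1 / 2) / Gamma (2 * s) = π := by
  have hpow : (2 : ℝ) ^ (2 * s - 1) * 2 ^ (1 - 2 * s) = 1 := by
    rw [← rpow_add two_pos, sub_add_sub_cancel, sub_self, rpow_zero]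
  rw [mul_assoc _ (Gamma s), Gamma_mul_Gamma_add_half_of_pos hs,
    div_eq_iff (Gamma_pos_of_pos (by positivity)).ne']
  linear_combination (Gamma (2 * s) * 2 ^ (2 * s - 1) * 2 ^ (1 - 2 * s)) * mul_self_sqrt pi_pos.le
    + π * Gamma (2 * s) * hpow

theorem stmt_9 (l : ℝ) (hl : 1 ≤ l) :
    ∫ x in (-2 : ℝ)..2, Real.cos ((1 - 1 / l) * Real.arcsin (x / 2)) *
        (4 - x ^ 2) ^ (-(1 / (2 * l))) =
      (2 : ℝ) ^ (1 - 1 / l) * Real.sqrt Real.pi * Real.Gamma (1 - 1 / (2 * l)) *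
        Real.Gamma (3 / 2 - 1 / (2 * l)) / Real.Gamma (2 - 1 / l) := by
  have hl0 : 0 < l := by linarith
  have hs : 0 < 1 - 1 / (2 * l) := by
    rw [sub_pos, div_lt_one (by positivity)]; linarith
  rw [show -(1 / (2 * l)) = (1 - 1 / l - 1) / 2 by field_simp; ring,
    intervalIntegral_cos_arcsin_eq_setIntegral,
    setIntegral_two_cos_rpow_mul_cos (by rw [sub_nonneg, div_le_one hl0]; exact hl),
    show 1 - 1 / l = 2 * (1 - 1 / (2 * l)) - 1 by field_simp; ring,
    show 3 / 2 - 1 / (2 * l) = 1 - 1 / (2 * l) + 1 / 2 by ring,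
    show 2 - 1 / l = 2 * (1 - 1 / (2 * l)) by field_simp]
  exact (two_rpow_mul_sqrt_pi_mul_Gamma_mul_Gamma_add_half_div hs).symm
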